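/- Let G be a simple graph and let C be a cycle of G containing consecutive vertices w, v, x, y, z, u. Let a, b, c be three pairwise distinct vertices of G not on C such that a is adjacent to v and z, b is adjacent to w and x, and c is adjacent to y and u. Then G contains a cycle of length |C| + 3 whose vertex set is V(C) ∪ {a, b, c}; the new cycle is obtained from C by replacing the path (w, v, x, y, z, u) with the path (w, b, x, v, a, z, y, c, u). -/

import Mathlib

/-!
Rotating and, if necessary, reversing `C`, write it as `w v x y z u` followed by a path `r` from
`u` back to `w` that avoids `v, x, y, z`, and also `a, b, c` since these lie off `C`. The new
cycle is the path `w b x v a z y c u` followed by `r`: its nine vertices are distinct and only its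
ends meet `r`, so it is a cycle. Its edges are those of `r`, which are disjoint from the five edges
of `w v x y z u`, together with the eight edges of the new path.
-/

namespace SimpleGraph.Walk

variable {V : Type*} {G : SimpleGraph V} {u v w : V}

theorem IsPath.exists_eq_cons_of_mem_edges {p : G.Walk u v} (hp : p.IsPath)
    (he : s(u, w) ∈ p.edges) : ∃ (h : G.Adj u w) (q : G.Walk w v), p = cons h q := by
  have hnil : ¬ p.Nil := edges_eq_nil.not.mp (List.ne_nil_of_mem he)
  obtain rfl := hp.eq_snd_of_mem_edges he
  exact ⟨_, _, (p.cons_tail_eq hnil).symm⟩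

theorem IsPath.disjoint_tail_support {r : G.Walk u w} (hr : r.IsPath) {l : List V}
    (hl : ∀ t ∈ l, t ∉ r.support) : (l ++ [u]).Disjoint r.support.tail := by
  have hu : u ∉ r.support.tail := (List.nodup_cons.1 (r.cons_tail_support ▸ hr.support_nodup)).1
  rw [List.disjoint_left]
  intro t ht htr
  rcases List.mem_append.1 ht with ht | ht
  · exact hl t ht (List.mem_of_mem_tail htr)
  · exact hu (List.mem_singleton.1 ht ▸ htr)

theorem IsCycle.exists_cons_of_mem_edges_start {c : G.Walk u u} (hc : c.IsCycle)
    (he : s(u, v) ∈ c.edges) :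
    ∃ (h : G.Adj u v) (p : G.Walk v u), (cons h p).IsCycle ∧ (cons h p).edges.Perm c.edges ∧
      ∀ t, t ∈ (cons h p).support ↔ t ∈ c.support := by
  cases c with
  | nil => simp at he
  | @cons _ t _ h p =>
    by_cases htv : t = v
    · subst htv
      exact ⟨h, p, hc, .rfl, fun _ => .rfl⟩
    have hp : p.IsPath := ((cons_isCycle_iff p h).1 hc).1
    have he' : s(u, v) ∈ p.reverse.edges := by
      rw [edges_reverse, List.mem_reverse]
      simpa [h.ne, Ne.symm htv] using he
    obtain ⟨h', q, hq⟩ := hp.reverse.exists_eq_cons_of_mem_edges he'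
    have hrev : (cons h p).reverse = cons h' (q.concat h.symm) := by
      rw [reverse_cons, hq, concat_eq_append, cons_append]
    refine ⟨h', q.concat h.symm, hrev ▸ hc.reverse, ?_, fun t => ?_⟩
    · rw [← hrev, edges_reverse]
      exact List.reverse_perm _
    · rw [← hrev, support_reverse, List.mem_reverse]

theorem IsCycle.exists_cons_of_mem_edges {v₀ : V} {c : G.Walk v₀ v₀} (hc : c.IsCycle)
    (he : s(u, v) ∈ c.edges) :
    ∃ (h : G.Adj u v) (p : G.Walk v u), (cons h p).IsCycle ∧ (cons h p).edges.Perm c.edges ∧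
      ∀ t, t ∈ (cons h p).support ↔ t ∈ c.support := by
  classical
  have hu := c.fst_mem_support_of_mem_edges he
  obtain ⟨h, p, hcyc, hedges, hsupp⟩ := (hc.rotate hu).exists_cons_of_mem_edges_start
    ((c.rotate_edges u hu).mem_iff.2 he)
  exact ⟨h, p, hcyc, hedges.trans (c.rotate_edges u hu).perm,
    fun t => (hsupp t).trans (c.mem_support_rotate_iff u hu)⟩

theorem IsCycle.exists_isPath_of_consecutive {v₀ x y z : V} {c : G.Walk v₀ v₀}
    (hc : c.IsCycle) (hd : [w, v, x, y, z, u].Nodup)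
    (hwv : s(w, v) ∈ c.edges) (hvx : s(v, x) ∈ c.edges) (hxy : s(x, y) ∈ c.edges)
    (hyz : s(y, z) ∈ c.edges) (hzu : s(z, u) ∈ c.edges) :
    ∃ r : G.Walk u w, r.IsPath ∧ v ∉ r.support ∧ x ∉ r.support ∧ y ∉ r.support ∧
      z ∉ r.support ∧ c.edges.Perm ([s(w, v), s(v, x), s(x, y), s(y, z), s(z, u)] ++ r.edges) ∧
      ∀ t, t ∈ c.support ↔ t ∈ [w, v, x, y, z] ++ r.support := by
  -- `simp` needs the distinctness facts in both orientations to rule out equalities of edges.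
  have hd' := List.nodup_reverse.2 hd
  simp only [List.reverse_cons, List.reverse_nil, List.nil_append, List.cons_append,
    List.nodup_cons, List.mem_cons, List.not_mem_nil, or_false, not_or] at hd hd'
  obtain ⟨h₁, p, hcyc, hedges, hsupp⟩ := hc.exists_cons_of_mem_edges hwv
  have hmem : ∀ {e}, e ∈ c.edges → e ∈ (cons h₁ p).edges := hedges.mem_iff.2
  have hp : p.IsPath := ((cons_isCycle_iff _ _).1 hcyc).1
  obtain ⟨h₂, p, rfl⟩ := hp.exists_eq_cons_of_mem_edges (w := x)
    (by simpa [hd, hd'] using hmem hvx)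
  obtain ⟨h₃, p, rfl⟩ := hp.of_cons.exists_eq_cons_of_mem_edges (w := y)
    (by simpa [hd, hd'] using hmem hxy)
  obtain ⟨h₄, p, rfl⟩ := hp.of_cons.of_cons.exists_eq_cons_of_mem_edges (w := z)
    (by simpa [hd, hd'] using hmem hyz)
  obtain ⟨h₅, r, rfl⟩ := hp.of_cons.of_cons.of_cons.exists_eq_cons_of_mem_edges (w := u)
    (by simpa [hd, hd'] using hmem hzu)
  simp only [cons_isCycle_iff, cons_isPath_iff, support_cons, List.mem_cons, not_or] at hcyc
  obtain ⟨⟨⟨⟨⟨hr, hzr⟩, -, hyr⟩, -, -, hxr⟩, -, -, -, hvr⟩, -⟩ := hcyc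
  exact ⟨r, hr, hvr, hxr, hyr, hzr, hedges.symm, fun t => (hsupp t).symm⟩

end SimpleGraph.Walk

theorem List.nodup_replacement_vertices {α : Type*} {w v x y z u a b c : α} {s : Set α}
    (h₁ : [w, v, x, y, z, u].Nodup) (h₂ : [a, b, c].Nodup)
    (hon : ∀ t ∈ [w, v, x, y, z, u], t ∈ s) (hoff : ∀ t ∈ [a, b, c], t ∉ s) :
    [w, b, x, v, a, z, y, c, u].Nodup := by
  classical
  have hperm : [w, b, x, v, a, z, y, c, u].Perm ([w, v, x, y, z, u] ++ [a, b, c]) := by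
    rw [List.perm_iff_count]
    intro t
    simp only [List.count_cons, List.cons_append, List.nil_append, List.count_nil]
    omega
  exact hperm.nodup_iff.2 (h₁.append h₂ fun t h₁ h₂ => hoff t h₂ (hon t h₁))

theorem List.setOf_mem_append_eq_sdiff_union {α : Type*} {l₁ l₂ r : List α}
    (h : l₁.Disjoint r) :
    {e | e ∈ l₂ ++ r} = ({e | e ∈ l₁ ++ r} \ {e | e ∈ l₁}) ∪ {e | e ∈ l₂} := by
  ext e
  have := @h e
  simp only [Set.mem_ofPred_eq, Set.mem_sdiff, Set.mem_union, List.mem_append]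
  tauto

open SimpleGraph Walk

/-- Case 3a replacement: if `w, v, x, y, z, u` are consecutive vertices of a cycle `C` and
`a, b, c` are pairwise distinct vertices off `C` with `a` adjacent to `v, z`, `b` adjacent
to `w, x`, and `c` adjacent to `y, u`, then `G` has a cycle of length `|C| + 3` on vertex
set `V(C) ∪ {a, b, c}`, obtained from `C` by replacing the path `(w, v, x, y, z, u)`
with the path `(w, b, x, v, a, z, y, c, u)`. -/
theorem case3a_replacement {V : Type*} (G : SimpleGraph V) {v0 : V}
    (C : G.Walk v0 v0) (hC : C.IsCycle) (w v x y z u a b c : V)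
    (hdist : [w, v, x, y, z, u].Pairwise (· ≠ ·))
    (hwv : s(w, v) ∈ C.edges) (hvx : s(v, x) ∈ C.edges) (hxy : s(x, y) ∈ C.edges)
    (hyz : s(y, z) ∈ C.edges) (hzu : s(z, u) ∈ C.edges)
    (habc : [a, b, c].Pairwise (· ≠ ·))
    (ha : a ∉ C.support) (hb : b ∉ C.support) (hc : c ∉ C.support)
    (hav : G.Adj a v) (haz : G.Adj a z) (hbw : G.Adj b w) (hbx : G.Adj b x)
    (hcy : G.Adj c y) (hcu : G.Adj c u) :
    ∃ (w0 : V) (C' : G.Walk w0 w0), C'.IsCycle ∧ C'.length = C.length + 3 ∧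
      (∀ t, t ∈ C'.support ↔ t ∈ C.support ∨ t = a ∨ t = b ∨ t = c) ∧
      {e | e ∈ C'.edges} =
        ({e | e ∈ C.edges} \ {s(w, v), s(v, x), s(x, y), s(y, z), s(z, u)}) ∪
          {s(w, b), s(b, x), s(x, v), s(v, a), s(a, z), s(z, y), s(y, c), s(c, u)} := by
  obtain ⟨r, hr, hvr, hxr, hyr, hzr, hedges, hsupp⟩ :=
    hC.exists_isPath_of_consecutive hdist hwv hvx hxy hyz hzu
  have hoff : ∀ t ∉ C.support, t ∉ r.support := fun t ht htr => ht ((hsupp t).2 (by simp [htr]))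
  let q : G.Walk w u := cons hbw.symm <| cons hbx <| cons (C.adj_of_mem_edges hvx).symm <|
    cons hav.symm <| cons haz <| cons (C.adj_of_mem_edges hyz).symm <| cons hcy.symm <|
    cons hcu nil
  have hq : q.IsPath := (isPath_def q).2 <| List.nodup_replacement_vertices hdist habc
    (s := {t | t ∈ C.support}) (by simp [hsupp]) (by simp [ha, hb, hc])
  have hsupp_disj : q.support.tail.Disjoint r.support.tail := by
    simpa [q] using hr.disjoint_tail_support (l := [b, x, v, a, z, y, c])
      (by simp [hvr, hxr, hyr, hzr, hoff a ha, hoff b hb, hoff c hc])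
  have hedges_disj : [s(w, v), s(v, x), s(x, y), s(y, z), s(z, u)].Disjoint r.edges :=
    (List.nodup_append'.1 (hedges.nodup_iff.1 hC.isTrail.edges_nodup)).2.2
  refine ⟨w, q.append r, hq.isCycle_append hr hsupp_disj (by simp [q]), ?_, fun t => ?_, ?_⟩
  · simp [q, ← length_edges, hedges.length_eq]
  · simp only [mem_support_append_iff, q, support_cons, support_nil, List.mem_cons,
      List.mem_append, List.not_mem_nil, or_false, hsupp]
    by_cases htu : t = u
    · subst htu; simp
    · simp only [htu]; tauto
  · have hnew : (q.append r).edges =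
        [s(w, b), s(b, x), s(x, v), s(v, a), s(a, z), s(z, y), s(y, c), s(c, u)] ++ r.edges := rfl
    rw [hnew, List.setOf_mem_append_eq_sdiff_union hedges_disj]
    ext
    simp only [Set.mem_union, Set.mem_sdiff, Set.mem_ofPred_eq, Set.mem_insert_iff,
      Set.mem_singleton_iff, List.mem_append, List.mem_cons, List.not_mem_nil, or_false,
      hedges.mem_iff]
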